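/- Every finite 2-tree has a center, which is either an edge or a triangle, and which is mapped to itself (setwise) by every automorphism of the 2-tree. -/

import Mathlib

/-- The complete graph on the vertices of a finset `V`. -/
def completeOn {α : Type*} (V : Finset α) : SimpleGraph α :=
  SimpleGraph.fromRel fun a b => a ∈ V ∧ b ∈ V

/-- The star graph joining the vertex `v` to every vertex of `K`. -/
def starTo {α : Type*} (v : α) (K : Finset α) : SimpleGraph α :=
  SimpleGraph.fromRel fun a b => a = v ∧ b ∈ K

/-- `IsKTree k V G` : the graph `G`, with vertex set (the finset) `V`, is a
`k`-tree.  Recursively: the complete graph on `k` vertices is a `k`-tree, and a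
graph obtained from a `k`-tree by adjoining a new vertex joined to all the
vertices of a `k`-clique is a `k`-tree. -/
inductive IsKTree {α : Type*} (k : ℕ) : Finset α → SimpleGraph α → Prop
  | base (V : Finset α) (h : V.card = k) : IsKTree k V (completeOn V)
  | step (V : Finset α) (G : SimpleGraph α) (v : α) (K : Finset α)
      (ht : IsKTree k V G) (hv : v ∉ V) (hK : K ⊆ V) (hcard : K.card = k)
      (hclique : G.IsClique K) [DecidableEq α] :
      IsKTree k (insert v V) (G ⊔ starTo v K)

/-!
A vertex of degree `k` in a `k`-tree is simplicial, and once there are at least `k + 2` vertices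
no two simplicial vertices are adjacent. Deleting all of them therefore leaves a `k`-tree, the
subgraph induced (as `G ⊓ completeOn W`) on the hub `W` of vertices of degree `> k`: each
construction step adds the clique `K` of the new vertex to the hub, and at most one vertex of `K`
was simplicial before. The hub is defined by degrees, so every automorphism preserves it.
Iterating until at most `k + 1` vertices remain leaves a clique of size `k` or `k + 1` fixed
setwise by all automorphisms; for `k = 2` it is an edge or a triangle.
-/

open Finset SimpleGraph

section Graphs

variable {α : Type*}

lemma completeOn_adj {V : Finset α} {a b : α} :
    (completeOn V).Adj a b ↔ a ≠ b ∧ a ∈ V ∧ b ∈ V := by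
  simp only [completeOn, fromRel_adj]
  tauto

lemma starTo_adj {v : α} {K : Finset α} {a b : α} :
    (starTo v K).Adj a b ↔ a ≠ b ∧ (a = v ∧ b ∈ K ∨ b = v ∧ a ∈ K) :=
  fromRel_adj ..

lemma isClique_completeOn (V : Finset α) : (completeOn V).IsClique V :=
  fun _ ha _ hb hab => completeOn_adj.2 ⟨hab, ha, hb⟩

lemma inf_completeOn_eq_of_isClique {G : SimpleGraph α} {K : Finset α} (h : G.IsClique K) :
    G ⊓ completeOn K = completeOn K := by
  ext a b
  simp only [inf_adj, completeOn_adj]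
  exact ⟨fun h => h.2, fun hab => ⟨h hab.2.1 hab.2.2 hab.1, hab⟩⟩

lemma sup_starTo_inf_completeOn_of_notMem {G : SimpleGraph α} {v : α} {K W : Finset α}
    (hv : v ∉ W) : (G ⊔ starTo v K) ⊓ completeOn W = G ⊓ completeOn W := by
  ext a b
  simp only [inf_adj, sup_adj, starTo_adj, completeOn_adj]
  constructor
  · rintro ⟨h | ⟨-, ⟨rfl, -⟩ | ⟨rfl, -⟩⟩, hW⟩
    · exact ⟨h, hW⟩
    · exact absurd hW.2.1 hv
    · exact absurd hW.2.2 hv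
  · exact fun h => ⟨Or.inl h.1, h.2⟩

lemma inf_completeOn_insert [DecidableEq α] {G : SimpleGraph α} {x : α} {W N : Finset α}
    (hN : (N : Set α) = G.neighborSet x) (hNW : N ⊆ W) :
    G ⊓ completeOn (insert x W) = G ⊓ completeOn W ⊔ starTo x N := by
  have hxN : ∀ {b}, b ∈ N ↔ G.Adj x b := fun {b} => by
    rw [← mem_coe, hN, mem_neighborSet]
  ext a b
  simp only [inf_adj, sup_adj, starTo_adj, completeOn_adj, mem_insert]
  constructor
  · rintro ⟨hab, hne, rfl | ha, rfl | hb⟩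
    · exact absurd rfl hne
    · exact Or.inr ⟨hne, Or.inl ⟨rfl, hxN.2 hab⟩⟩
    · exact Or.inr ⟨hne, Or.inr ⟨rfl, hxN.2 hab.symm⟩⟩
    · exact Or.inl ⟨hab, hne, ha, hb⟩
  · rintro (⟨hab, hne, ha, hb⟩ | ⟨hne, ⟨rfl, hb⟩ | ⟨rfl, ha⟩⟩)
    · exact ⟨hab, hne, Or.inr ha, Or.inr hb⟩
    · exact ⟨hxN.1 hb, hne, Or.inl rfl, Or.inr (hNW hb)⟩
    · exact ⟨(hxN.1 ha).symm, hne, Or.inr (hNW ha), Or.inl rfl⟩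

lemma neighborSet_sup_starTo_self {G : SimpleGraph α} {v : α} {K : Finset α}
    (hv : v ∉ G.support) (hvK : v ∉ K) : (G ⊔ starTo v K).neighborSet v = K := by
  ext b
  simp only [neighborSet_sup, Set.mem_union, mem_neighborSet, starTo_adj, mem_coe]
  constructor
  · rintro (h | ⟨-, ⟨-, hb⟩ | ⟨rfl, hv'⟩⟩)
    · exact absurd ⟨b, h⟩ hv
    · exact hb
    · exact absurd hv' hvK
  · exact fun hb => Or.inr ⟨fun h => hvK (h ▸ hb), Or.inl ⟨trivial, hb⟩⟩

lemma neighborSet_sup_starTo_of_mem {G : SimpleGraph α} {v u : α} {K : Finset α}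
    (hvK : v ∉ K) (hu : u ∈ K) :
    (G ⊔ starTo v K).neighborSet u = insert v (G.neighborSet u) := by
  ext b
  simp only [neighborSet_sup, Set.mem_union, Set.mem_insert_iff, mem_neighborSet, starTo_adj]
  constructor
  · rintro (h | ⟨-, ⟨rfl, -⟩ | ⟨rfl, -⟩⟩)
    · exact Or.inr h
    · exact absurd hu hvK
    · exact Or.inl rfl
  · rintro (rfl | h)
    · exact Or.inr ⟨fun h => hvK (h ▸ hu), Or.inr ⟨rfl, hu⟩⟩
    · exact Or.inl h

lemma neighborSet_sup_starTo_of_notMem {G : SimpleGraph α} {v u : α} {K : Finset α}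
    (hu : u ∉ K) (huv : u ≠ v) : (G ⊔ starTo v K).neighborSet u = G.neighborSet u := by
  ext b
  simp only [neighborSet_sup, Set.mem_union, mem_neighborSet, starTo_adj]
  constructor
  · rintro (h | ⟨-, ⟨rfl, -⟩ | ⟨rfl, hu'⟩⟩)
    · exact h
    · exact absurd rfl huv
    · exact absurd hu' hu
  · exact Or.inl

lemma ncard_neighborSet_sup_starTo_of_mem [Finite α] {G : SimpleGraph α} {v u : α}
    {K : Finset α} (hv : v ∉ G.support) (hvK : v ∉ K) (hu : u ∈ K) :
    ((G ⊔ starTo v K).neighborSet u).ncard = (G.neighborSet u).ncard + 1 := by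
  rw [neighborSet_sup_starTo_of_mem hvK hu,
    Set.ncard_insert_of_notMem fun h => hv ⟨u, (G.mem_neighborSet u v).1 h |>.symm⟩]

lemma SimpleGraph.IsClique.card_sub_one_le_ncard_neighborSet [Finite α] [DecidableEq α]
    {G : SimpleGraph α} {s : Finset α} (hs : G.IsClique s) {u : α} (hu : u ∈ s) :
    s.card - 1 ≤ (G.neighborSet u).ncard := by
  rw [← card_erase_of_mem hu, ← Set.ncard_coe_finset]
  refine Set.ncard_le_ncard fun b hb => ?_
  rw [coe_erase, Set.mem_sdiff, Set.mem_singleton_iff] at hb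
  exact hs hu hb.1 (Ne.symm hb.2)

end Graphs

namespace IsKTree

variable {α : Type*} {k : ℕ} {V : Finset α} {G : SimpleGraph α}

theorem support_subset (ht : IsKTree k V G) : G.support ⊆ V := by
  induction ht with
  | base V _ =>
    rintro a ⟨b, hab⟩
    exact (completeOn_adj.1 hab).2.1
  | step V G v K _ _ hK _ _ ih =>
    rintro a ⟨b, hab | hab⟩
    · exact mem_insert_of_mem (ih ⟨b, hab⟩)
    · rcases (starTo_adj.1 hab).2 with ⟨rfl, -⟩ | ⟨-, ha⟩
      · exact mem_insert_self _ _
      · exact mem_insert_of_mem (hK ha)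

theorem notMem_support (ht : IsKTree k V G) {v : α} (hv : v ∉ V) : v ∉ G.support :=
  fun h => hv (ht.support_subset h)

theorem neighborSet_subset (ht : IsKTree k V G) (u : α) : G.neighborSet u ⊆ V :=
  (G.neighborSet_subset_support u).trans ht.support_subset

theorem le_card (ht : IsKTree k V G) : k ≤ V.card := by
  induction ht with
  | base V h => exact h.ge
  | step V G v K _ hv _ _ _ ih => rw [card_insert_of_notMem hv]; omega

theorem isClique_of_card_le (ht : IsKTree k V G) (h : V.card ≤ k + 1) : G.IsClique V := by
  cases ht with
  | base V _ => exact isClique_completeOn V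
  | step V G v K ht hv hK hcard hclique =>
    rw [card_insert_of_notMem hv] at h
    obtain rfl : K = V := eq_of_subset_of_card_le hK (by have := ht.le_card; omega)
    rw [coe_insert, isClique_insert]
    exact ⟨hclique.mono le_sup_left,
      fun b hb hne => Or.inr (starTo_adj.2 ⟨hne, Or.inl ⟨rfl, hb⟩⟩)⟩

theorem inf_completeOn_insert_of_isClique [DecidableEq α] {W N : Finset α} {x : α}
    (hW : IsKTree k W (G ⊓ completeOn W)) (hx : x ∉ W) (hN : (N : Set α) = G.neighborSet x)
    (hNW : N ⊆ W) (hcard : N.card = k) (hcl : G.IsClique N) :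
    IsKTree k (insert x W) (G ⊓ completeOn (insert x W)) := by
  rw [_root_.inf_completeOn_insert hN hNW]
  exact IsKTree.step W _ x N hW hx hNW hcard
    fun a ha b hb hab => ⟨hcl ha hb hab, completeOn_adj.2 ⟨hab, hNW ha, hNW hb⟩⟩

variable [Finite α]

theorem le_ncard_neighborSet (ht : IsKTree k V G) (hV : k + 1 ≤ V.card) {u : α}
    (hu : u ∈ V) : k ≤ (G.neighborSet u).ncard := by
  induction ht with
  | base V h => omega
  | step V G v K ht hv hK hcard hclique ih =>
    rw [card_insert_of_notMem hv] at hV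
    by_cases hVk : k + 1 ≤ V.card
    · rcases mem_insert.1 hu with rfl | hu
      · rw [neighborSet_sup_starTo_self (ht.notMem_support hv) (fun h => hv (hK h)),
          Set.ncard_coe_finset, hcard]
      · exact (ih hVk hu).trans (Set.ncard_le_ncard (neighborSet_mono le_sup_left u))
    · have ht' := IsKTree.step V G v K ht hv hK hcard hclique
      have hcl := ht'.isClique_of_card_le (by rw [card_insert_of_notMem hv]; omega)
      have := hcl.card_sub_one_le_ncard_neighborSet hu
      rw [card_insert_of_notMem hv] at this
      omega

theorem isClique_neighborSet (ht : IsKTree k V G) {u : α}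
    (hu : (G.neighborSet u).ncard = k) : G.IsClique (G.neighborSet u) := by
  induction ht with
  | base V h =>
    have ht := IsKTree.base (k := k) V h
    exact (ht.isClique_of_card_le (by omega)).subset (ht.neighborSet_subset u)
  | step V G v K ht hv hK hcard hclique ih =>
    have hvK : v ∉ K := fun h => hv (hK h)
    have hvG := ht.notMem_support hv
    by_cases huv : u = v
    · subst huv
      rw [neighborSet_sup_starTo_self hvG hvK]
      exact hclique.mono le_sup_left
    by_cases huK : u ∈ K
    · have ht' := IsKTree.step V G v K ht hv hK hcard hclique
      refine (ht'.isClique_of_card_le ?_).subset (ht'.neighborSet_subset u)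
      rw [ncard_neighborSet_sup_starTo_of_mem hvG hvK huK] at hu
      rw [card_insert_of_notMem hv]
      by_contra hV
      have := ht.le_ncard_neighborSet (by omega) (hK huK)
      omega
    rw [neighborSet_sup_starTo_of_notMem huK huv] at hu ⊢
    exact (ih hu).mono le_sup_left

theorem lt_ncard_neighborSet_of_adj (ht : IsKTree k V G) (hV : k + 2 ≤ V.card) {u w : α}
    (hu : (G.neighborSet u).ncard = k) (huw : G.Adj u w) :
    k < (G.neighborSet w).ncard := by
  induction ht with
  | base V h => omega
  | step V G v K ht hv hK hcard hclique ih =>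
    rw [card_insert_of_notMem hv] at hV
    have hvK : v ∉ K := fun h => hv (hK h)
    have hvG := ht.notMem_support hv
    have lt_of_mem : ∀ x ∈ K, k < ((G ⊔ starTo v K).neighborSet x).ncard := fun x hx => by
      rw [ncard_neighborSet_sup_starTo_of_mem hvG hvK hx]
      have := ht.le_ncard_neighborSet (by omega) (hK hx)
      omega
    by_cases huv : u = v
    · subst huv
      apply lt_of_mem
      rw [← mem_coe, ← neighborSet_sup_starTo_self hvG hvK]
      exact huw
    by_cases huK : u ∈ K
    · exact absurd hu (lt_of_mem u huK).ne'
    have huw' : G.Adj u w := by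
      rwa [← mem_neighborSet, ← neighborSet_sup_starTo_of_notMem huK huv]
    rw [neighborSet_sup_starTo_of_notMem huK huv] at hu
    by_cases hwK : w ∈ K
    · exact lt_of_mem w hwK
    rw [neighborSet_sup_starTo_of_notMem hwK (by rintro rfl; exact hvG ⟨u, huw'.symm⟩)]
    by_cases hV' : k + 2 ≤ V.card
    · exact ih hV' hu huw'
    -- `K` and `V.erase u` both have `k` elements, so `w ∈ V.erase u` lies in `K`
    refine absurd ?_ hwK
    have huV := ht.support_subset ⟨w, huw'⟩
    obtain rfl : K = V.erase u :=
      eq_of_subset_of_card_le (fun x hx => mem_erase.2 ⟨fun h => huK (h ▸ hx), hK hx⟩)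
        (by rw [card_erase_of_mem huV]; omega)
    exact mem_erase.2 ⟨(G.ne_of_adj huw').symm, ht.support_subset ⟨u, huw'.symm⟩⟩

end IsKTree

section Hub

variable {α : Type*} [Fintype α] {k : ℕ}

open Classical in
noncomputable def hub (k : ℕ) (G : SimpleGraph α) : Finset α :=
  {u | k < (G.neighborSet u).ncard}

lemma mem_hub {G : SimpleGraph α} {u : α} : u ∈ hub k G ↔ k < (G.neighborSet u).ncard := by
  simp [hub]

lemma SimpleGraph.Iso.image_hub [DecidableEq α] {G G' : SimpleGraph α} (φ : G ≃g G') :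
    (hub k G).image φ = hub k G' := by
  have hdeg : ∀ a, (G'.neighborSet (φ a)).ncard = (G.neighborSet a).ncard := fun a => by
    rw [← φ.image_neighborSet, Set.ncard_image_of_injective _ φ.injective]
  ext u
  obtain ⟨a, rfl⟩ := φ.surjective u
  rw [φ.injective.mem_finset_image, mem_hub, mem_hub, hdeg]

def SimpleGraph.Iso.infCompleteOn [DecidableEq α] {G G' : SimpleGraph α} (φ : G ≃g G')
    {W W' : Finset α} (hW : W.image φ = W') : G ⊓ completeOn W ≃g G' ⊓ completeOn W' where
  toEquiv := φ.toEquiv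
  map_rel_iff' {a b} := by
    have hmem : ∀ x, φ x ∈ W' ↔ x ∈ W := fun x => by
      rw [← hW, φ.injective.mem_finset_image]
    simp only [inf_adj, completeOn_adj, RelIso.coe_fn_toEquiv, φ.map_adj_iff, hmem,
      φ.injective.ne_iff]

namespace IsKTree

variable {V : Finset α} {G : SimpleGraph α}

theorem hub_subset (ht : IsKTree k V G) : hub k G ⊆ V := fun u hu => by
  obtain ⟨w, hw⟩ := Set.nonempty_of_ncard_ne_zero (Nat.ne_zero_of_lt (mem_hub.1 hu))
  exact ht.support_subset ⟨w, hw⟩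

theorem hub_ssubset (ht : IsKTree k V G) (hV : k + 1 ≤ V.card) : hub k G ⊂ V := by
  cases ht with
  | base V h => omega
  | step V G v K ht hv hK hcard hclique =>
    refine (ssubset_iff_of_subset (IsKTree.step V G v K ht hv hK hcard hclique).hub_subset).2
      ⟨v, mem_insert_self v V, fun h => ?_⟩
    rw [mem_hub, neighborSet_sup_starTo_self (ht.notMem_support hv) (fun h => hv (hK h)),
      Set.ncard_coe_finset, hcard] at h
    exact lt_irrefl k h

theorem hub_eq_empty_of_card_le [DecidableEq α] (ht : IsKTree k V G) (hV : V.card ≤ k + 1) :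
    hub k G = ∅ := by
  refine eq_empty_of_forall_notMem fun u hu => ?_
  have huV := ht.hub_subset hu
  have hle : (G.neighborSet u).ncard ≤ (V.erase u).card := by
    rw [← Set.ncard_coe_finset, coe_erase]
    exact Set.ncard_le_ncard fun w hw =>
      ⟨ht.neighborSet_subset u hw, (G.ne_of_adj hw).symm⟩
  rw [card_erase_of_mem huV] at hle
  have := mem_hub.1 hu
  omega

theorem hub_sup_starTo [DecidableEq α] (ht : IsKTree k V G) (hV : k + 1 ≤ V.card) {v : α}
    {K : Finset α} (hv : v ∉ V) (hK : K ⊆ V) (hcard : K.card = k) :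
    hub k (G ⊔ starTo v K) = hub k G ∪ K := by
  have hvK : v ∉ K := fun h => hv (hK h)
  have hvG := ht.notMem_support hv
  ext u
  rw [mem_union, mem_hub, mem_hub]
  by_cases huv : u = v
  · subst huv
    have hvV : u ∉ hub k G := fun h => hv (ht.hub_subset h)
    rw [neighborSet_sup_starTo_self hvG hvK, Set.ncard_coe_finset, hcard, ← mem_hub]
    simp only [lt_irrefl, hvV, hvK, or_self]
  by_cases huK : u ∈ K
  · rw [ncard_neighborSet_sup_starTo_of_mem hvG hvK huK]
    have := ht.le_ncard_neighborSet hV (hK huK)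
    simp only [huK, or_true, iff_true]
    omega
  · rw [neighborSet_sup_starTo_of_notMem huK huv]
    simp only [huK, or_false]

theorem isKTree_hub [DecidableEq α] (ht : IsKTree k V G) (hV : k + 2 ≤ V.card) :
    IsKTree k (hub k G) (G ⊓ completeOn (hub k G)) := by
  induction ht with
  | base V h => omega
  | step V G v K ht hv hK hcard hclique ih =>
    rw [card_insert_of_notMem hv] at hV
    rw [ht.hub_sup_starTo (by omega) hv hK hcard, sup_starTo_inf_completeOn_of_notMem
      (by simp only [mem_union, not_or]; exact ⟨fun h => hv (ht.hub_subset h), fun h => hv (hK h)⟩)]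
    by_cases hVk : V.card ≤ k + 1
    · rw [ht.hub_eq_empty_of_card_le hVk, empty_union, inf_completeOn_eq_of_isClique hclique]
      exact .base K hcard
    replace hVk : k + 2 ≤ V.card := by omega
    by_cases hKhub : K ⊆ hub k G
    · rw [union_eq_left.2 hKhub]
      exact ih hVk
    -- simplicial vertices are pairwise non-adjacent, so at most one vertex `x` of the clique `K`
    -- lies outside the hub, and it joins the hub glued to its `k` neighbours
    obtain ⟨x, hxK, hx⟩ := not_subset.1 hKhub
    have hdeg : (G.neighborSet x).ncard = k :=
      le_antisymm (not_lt.1 (mem_hub.not.1 hx)) (ht.le_ncard_neighborSet (by omega) (hK hxK))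
    have hnbr : ∀ w, G.Adj x w → w ∈ hub k G := fun w hw =>
      mem_hub.2 (ht.lt_ncard_neighborSet_of_adj hVk hdeg hw)
    have hunion : hub k G ∪ K = insert x (hub k G) := by
      ext y
      rw [mem_union, mem_insert]
      constructor
      · rintro (hy | hy)
        · exact Or.inr hy
        · by_cases hyx : y = x
          · exact Or.inl hyx
          · exact Or.inr (hnbr y (hclique hxK hy (Ne.symm hyx)))
      · rintro (rfl | hy)
        · exact Or.inr hxK
        · exact Or.inl hy
    obtain ⟨N, hN⟩ := (G.neighborSet x).toFinite.exists_finset_coe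
    rw [hunion]
    exact (ih hVk).inf_completeOn_insert_of_isClique hx hN
      (fun w hw => hnbr w (by rwa [← mem_coe, hN] at hw))
      (by rw [← Set.ncard_coe_finset, hN, hdeg]) (hN ▸ ht.isClique_neighborSet hdeg)

theorem exists_invariant_clique [DecidableEq α] (ht : IsKTree k V G) :
    ∃ S : Finset α, G.IsClique S ∧ (S.card = k ∨ S.card = k + 1) ∧
      ∀ φ : G ≃g G, V.image φ = V → S.image φ = S := by
  induction hn : V.card using Nat.strong_induction_on generalizing V G with
  | _ n ih =>
  subst hn
  by_cases hV : V.card ≤ k + 1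
  · exact ⟨V, ht.isClique_of_card_le hV, by have := ht.le_card; omega, fun _ hφ => hφ⟩
  obtain ⟨S, hSc, hScard, hS⟩ :=
    ih _ (card_lt_card (ht.hub_ssubset (by omega))) (ht.isKTree_hub (by omega)) rfl
  exact ⟨S, hSc.mono inf_le_left, hScard,
    fun φ _ => hS (φ.infCompleteOn φ.image_hub) φ.image_hub⟩

end IsKTree

end Hub

/-- **Center of a 2-tree.** Every finite 2-tree has a center, which is either an
edge or a triangle, and which is mapped to itself (setwise) by every
automorphism. -/
theorem two_tree_center {α : Type*} [Fintype α] [DecidableEq α]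
    {G : SimpleGraph α} (ht : IsKTree 2 Finset.univ G) :
    ∃ S : Finset α,
      ((∃ a b : α, G.Adj a b ∧ S = {a, b}) ∨ (S.card = 3 ∧ G.IsClique S)) ∧
      ∀ φ : G ≃g G, S.image φ = S := by
  obtain ⟨S, hS, hcard, hφ⟩ := ht.exists_invariant_clique
  refine ⟨S, ?_, fun φ => hφ φ (image_univ_equiv φ.toEquiv)⟩
  rcases hcard with h2 | h3
  · obtain ⟨a, b, hab, rfl⟩ := card_eq_two.1 h2
    exact Or.inl ⟨a, b, hS (by simp) (by simp) hab, rfl⟩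
  · exact Or.inr ⟨h3, hS⟩
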